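/- arXiv:2107.00069 — 9 statements merged into one kernel-verified Lean document; each statement's English description precedes it below -/
import Mathlib

section
/- Let m ≥ 1, let y ∈ ℝᵐ with y ≠ 0, let Δ be a real m×m matrix satisfying the Rayleigh lower bound q₁ with q₁ > −1, let β̂ ≥ 0, c > 0, d ≥ 0, and let f ∈ ℝᵐ with ‖f‖ ≤ c·d. Set b₀ = 1 + q₁, β* = d/b₀, and let ẏ = −β̂·c·(I + Δ)(y/‖y‖) − (I + Δ)y + f. Then 2⟨y, ẏ⟩ ≤ −2·b₀·c·(β̂ − β*)·‖y‖ − 2·b₀·‖y‖². -/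
/-- `Δ` satisfies the Rayleigh lower bound `q₁`: `⟨v, Δv⟩ ≥ q₁‖v‖²` for all `v`. -/
def RayleighLB {m : ℕ} (Δ : EuclideanSpace ℝ (Fin m) →L[ℝ] EuclideanSpace ℝ (Fin m))
    (q₁ : ℝ) : Prop :=
  ∀ v : EuclideanSpace ℝ (Fin m), q₁ * ‖v‖ ^ 2 ≤ (inner ℝ v (Δ v) : ℝ)

/-! Each term of `⟨y, ẏ⟩` is bounded separately: the two `(I + Δ)` terms by the coercivity
constant `b₀ = 1 + q₁` (the normalized one with `‖y‖` in place of `‖y‖²`), and the forcing term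
by Cauchy–Schwarz. -/

theorem RayleighLB.one_add {m : ℕ} {Δ : EuclideanSpace ℝ (Fin m) →L[ℝ] EuclideanSpace ℝ (Fin m)}
    {q₁ : ℝ} (hΔ : RayleighLB Δ q₁) (v : EuclideanSpace ℝ (Fin m)) :
    (1 + q₁) * ‖v‖ ^ 2 ≤
      inner ℝ v ((ContinuousLinearMap.id ℝ (EuclideanSpace ℝ (Fin m)) + Δ) v) := by
  rw [add_apply, ContinuousLinearMap.id_apply, inner_add_right,
    real_inner_self_eq_norm_sq]
  linarith [hΔ v]

theorem mul_norm_le_inner_map_normalize {E : Type*} [NormedAddCommGroup E]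
    [InnerProductSpace ℝ E] {L : E →L[ℝ] E} {b : ℝ} (hL : ∀ v, b * ‖v‖ ^ 2 ≤ inner ℝ v (L v))
    (y : E) : b * ‖y‖ ≤ inner ℝ y (L (‖y‖⁻¹ • y)) := by
  rcases eq_or_ne y 0 with rfl | hy
  · simp
  have hn : 0 < ‖y‖ := norm_pos_iff.mpr hy
  calc b * ‖y‖ = ‖y‖⁻¹ * (b * ‖y‖ ^ 2) := by field_simp
    _ ≤ ‖y‖⁻¹ * inner ℝ y (L y) := by gcongr; exact hL y
    _ = inner ℝ y (L (‖y‖⁻¹ • y)) := by rw [map_smul, real_inner_smul_right]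

theorem statement8_general {m : ℕ}
    (y f yd : EuclideanSpace ℝ (Fin m))
    (Δ : EuclideanSpace ℝ (Fin m) →L[ℝ] EuclideanSpace ℝ (Fin m))
    (q₁ βhat c d : ℝ) (hq₁ : -1 < q₁) (hΔ : RayleighLB Δ q₁)
    (hβhat : 0 ≤ βhat) (hc : 0 < c)
    (hf : ‖f‖ ≤ c * d)
    (hyd : yd = -(βhat * c) • ((ContinuousLinearMap.id ℝ (EuclideanSpace ℝ (Fin m)) + Δ)
        (‖y‖⁻¹ • y)) - (ContinuousLinearMap.id ℝ (EuclideanSpace ℝ (Fin m)) + Δ) y + f) :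
    2 * (inner ℝ y yd : ℝ) ≤
      -2 * (1 + q₁) * c * (βhat - d / (1 + q₁)) * ‖y‖ - 2 * (1 + q₁) * ‖y‖ ^ 2 := by
  set L := ContinuousLinearMap.id ℝ (EuclideanSpace ℝ (Fin m)) + Δ
  have hb : 1 + q₁ ≠ 0 := by linarith
  have hnormalized := mul_norm_le_inner_map_normalize hΔ.one_add y
  have hforcing : inner ℝ y f ≤ ‖y‖ * (c * d) :=
    (real_inner_le_norm y f).trans (mul_le_mul_of_nonneg_left hf (norm_nonneg y))
  have hexpand : inner ℝ y yd =
      -(βhat * c) * inner ℝ y (L (‖y‖⁻¹ • y)) - inner ℝ y (L y) + inner ℝ y f := by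
    rw [hyd, inner_add_right, inner_sub_right, real_inner_smul_right]
  have hrhs : -2 * (1 + q₁) * c * (βhat - d / (1 + q₁)) * ‖y‖ =
      -2 * (βhat * c) * ((1 + q₁) * ‖y‖) + 2 * (‖y‖ * (c * d)) := by
    field_simp
    ring
  rw [hexpand, hrhs]
  nlinarith [mul_le_mul_of_nonneg_left hnormalized (by positivity : 0 ≤ βhat * c),
    hΔ.one_add y]

theorem statement8 {m : ℕ} (hm : 1 ≤ m)
    (y f yd : EuclideanSpace ℝ (Fin m))
    (Δ : EuclideanSpace ℝ (Fin m) →L[ℝ] EuclideanSpace ℝ (Fin m))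
    (q₁ βhat c d : ℝ) (hq₁ : -1 < q₁) (hΔ : RayleighLB Δ q₁)
    (hβhat : 0 ≤ βhat) (hc : 0 < c) (hd : 0 ≤ d) (hy : y ≠ 0)
    (hf : ‖f‖ ≤ c * d)
    (hyd : yd = -(βhat * c) • ((ContinuousLinearMap.id ℝ (EuclideanSpace ℝ (Fin m)) + Δ)
        (‖y‖⁻¹ • y)) - (ContinuousLinearMap.id ℝ (EuclideanSpace ℝ (Fin m)) + Δ) y + f) :
    2 * (inner ℝ y yd : ℝ) ≤
      -2 * (1 + q₁) * c * (βhat - d / (1 + q₁)) * ‖y‖ - 2 * (1 + q₁) * ‖y‖ ^ 2 :=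
  statement8_general y f yd Δ q₁ βhat c d hq₁ hΔ hβhat hc hf hyd
end

section
/- Let m ≥ 1, α > 0, T_c > 0, d ≥ 0, q₁ > −1, b₀ = 1 + q₁, β* = d/b₀. Let y : [0, ∞) → ℝᵐ and β̂ : [0, ∞) → ℝ be differentiable with y(τ) ≠ 0 for all τ, β̂(0) ≥ 0, β̂'(τ) = α·T_c·e^{−ατ}·‖y(τ)‖, and y'(τ) = −β̂(τ)·α·T_c·e^{−ατ}·(I + Δ(τ))(y(τ)/‖y(τ)‖) − (I + Δ(τ))y(τ) + f̄(τ), where each Δ(τ) satisfies the Rayleigh lower bound q₁ and ‖f̄(τ)‖ ≤ α·T_c·e^{−ατ}·d. Then the Lyapunov function V(τ) = ‖y(τ)‖² + b₀(β̂(τ) − β*)² satisfies V(τ₂) + 2·b₀·∫_{τ₁}^{τ₂} ‖y(s)‖² ds ≤ V(τ₁) for all 0 ≤ τ₁ ≤ τ₂; in particular V is nonincreasing on [0, ∞). -/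
/-!
With `b = 1 + q₁` and `g = α T_c e^{-ατ}`, the Lyapunov function satisfies `V' ≤ -2b‖y‖²`.
The gain `β̂` is nondecreasing, hence nonnegative, so the normalized feedback term contributes
at most `-2 β̂ g b ‖y‖` to `(‖y‖²)'`; this is cancelled by the `2 b β̂ g ‖y‖` in the derivative
of `b (β̂ - β*)²`. The disturbance contributes at most `2 g d ‖y‖`, cancelled by the remaining
`-2 b β* g ‖y‖ = -2 g d ‖y‖`. Integrating `V' ≤ -2b‖y‖²` gives the dissipation inequality.
-/

open Set
open scoped RealInnerProductSpace

lemma RayleighLB.mul_norm_sq_le_inner_id_add {m : ℕ}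
    {Δ : EuclideanSpace ℝ (Fin m) →L[ℝ] EuclideanSpace ℝ (Fin m)} {q₁ : ℝ}
    (hΔ : RayleighLB Δ q₁) (v : EuclideanSpace ℝ (Fin m)) :
    (1 + q₁) * ‖v‖ ^ 2 ≤ ⟪v, (ContinuousLinearMap.id ℝ (EuclideanSpace ℝ (Fin m)) + Δ) v⟫ := by
  change _ ≤ ⟪v, v + Δ v⟫
  rw [inner_add_right, real_inner_self_eq_norm_sq]
  linarith [hΔ v]

lemma monotoneOn_Ici_of_hasDerivWithinAt_nonneg {f f' : ℝ → ℝ} {a : ℝ}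
    (hf : ∀ x ∈ Ici a, HasDerivWithinAt f (f' x) (Ici a) x) (hf' : ∀ x ∈ Ici a, 0 ≤ f' x) :
    MonotoneOn f (Ici a) :=
  monotoneOn_of_hasDerivWithinAt_nonneg (convex_Ici a)
    (fun x hx => (hf x hx).continuousWithinAt)
    (fun x hx => (hf x (interior_subset hx)).mono interior_subset)
    (fun x hx => hf' x (interior_subset hx))

section

variable {E : Type*} [NormedAddCommGroup E] [InnerProductSpace ℝ E]

lemma mul_norm_le_inner_apply_inv_norm_smul {A : E →L[ℝ] E} {b : ℝ}
    (hA : ∀ v, b * ‖v‖ ^ 2 ≤ ⟪v, A v⟫) (v : E) :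
    b * ‖v‖ ≤ ⟪v, A (‖v‖⁻¹ • v)⟫ := by
  rw [map_smul, real_inner_smul_right]
  calc b * ‖v‖ = b * (‖v‖⁻¹ * ‖v‖ * ‖v‖) := by rw [inv_mul_mul_self]
    _ = ‖v‖⁻¹ * (b * ‖v‖ ^ 2) := by ring
    _ ≤ ‖v‖⁻¹ * ⟪v, A v⟫ := mul_le_mul_of_nonneg_left (hA v) (by positivity)

lemma inner_feedback_le {A : E →L[ℝ] E} {b k : ℝ} (hA : ∀ v, b * ‖v‖ ^ 2 ≤ ⟪v, A v⟫)
    (hk : 0 ≤ k) (v f : E) :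
    ⟪v, -k • A (‖v‖⁻¹ • v) - A v + f⟫ ≤ -(k * (b * ‖v‖)) - b * ‖v‖ ^ 2 + ‖v‖ * ‖f‖ := by
  rw [inner_add_right, inner_sub_right, real_inner_smul_right]
  linarith [mul_le_mul_of_nonneg_left (mul_norm_le_inner_apply_inv_norm_smul hA v) hk, hA v,
    real_inner_le_norm v f]

def lyapunov (y : ℝ → E) (βhat : ℝ → ℝ) (b βstar τ : ℝ) : ℝ :=
  ‖y τ‖ ^ 2 + b * (βhat τ - βstar) ^ 2

lemma hasDerivWithinAt_lyapunov {y : ℝ → E} {βhat : ℝ → ℝ} {y' : E} {β' b βstar τ : ℝ}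
    {s : Set ℝ} (hy : HasDerivWithinAt y y' s τ) (hβ : HasDerivWithinAt βhat β' s τ) :
    HasDerivWithinAt (lyapunov y βhat b βstar)
      (2 * ⟪y τ, y'⟫ + b * (2 * (βhat τ - βstar) * β')) s τ :=
  (hy.norm_sq.add (((hβ.sub_const βstar).pow 2).const_mul b)).congr_deriv (by ring)

lemma lyapunov_derivative_le {A : E →L[ℝ] E} {b β βstar g : ℝ}
    (hA : ∀ v, b * ‖v‖ ^ 2 ≤ ⟪v, A v⟫) (hβ : 0 ≤ β) (hg : 0 ≤ g) (v f : E)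
    (hf : ‖f‖ ≤ g * (b * βstar)) :
    2 * ⟪v, -(β * g) • A (‖v‖⁻¹ • v) - A v + f⟫ + b * (2 * (β - βstar) * (g * ‖v‖)) ≤
      -(2 * b) * ‖v‖ ^ 2 := by
  linarith [inner_feedback_le hA (mul_nonneg hβ hg) v f,
    mul_le_mul_of_nonneg_left hf (norm_nonneg v)]

theorem lyapunov_add_integral_le {y : ℝ → E} {βhat g : ℝ → ℝ} {A : ℝ → E →L[ℝ] E}
    {fbar : ℝ → E} {b βstar : ℝ}
    (hg : ∀ τ ∈ Ici (0 : ℝ), 0 ≤ g τ) (hβ0 : 0 ≤ βhat 0)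
    (hβ' : ∀ τ ∈ Ici (0 : ℝ), HasDerivWithinAt βhat (g τ * ‖y τ‖) (Ici 0) τ)
    (hy' : ∀ τ ∈ Ici (0 : ℝ), HasDerivWithinAt y
      (-(βhat τ * g τ) • A τ (‖y τ‖⁻¹ • y τ) - A τ (y τ) + fbar τ) (Ici 0) τ)
    (hA : ∀ τ ∈ Ici (0 : ℝ), ∀ v, b * ‖v‖ ^ 2 ≤ ⟪v, A τ v⟫)
    (hfbar : ∀ τ ∈ Ici (0 : ℝ), ‖fbar τ‖ ≤ g τ * (b * βstar))
    {τ₁ τ₂ : ℝ} (h₁ : 0 ≤ τ₁) (h₁₂ : τ₁ ≤ τ₂) :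
    lyapunov y βhat b βstar τ₂ + 2 * b * ∫ s in τ₁..τ₂, ‖y s‖ ^ 2 ≤
      lyapunov y βhat b βstar τ₁ := by
  have hIcc : Icc τ₁ τ₂ ⊆ Ici 0 := fun s hs => h₁.trans hs.1
  have hIoo : Ioo τ₁ τ₂ ⊆ Ici 0 := Ioo_subset_Icc_self.trans hIcc
  have hβ_nonneg : ∀ τ ∈ Ici (0 : ℝ), 0 ≤ βhat τ := fun τ hτ =>
    hβ0.trans <| monotoneOn_Ici_of_hasDerivWithinAt_nonneg hβ'
      (fun x hx => mul_nonneg (hg x hx) (norm_nonneg _)) self_mem_Ici hτ hτ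
  have hV' : ∀ x ∈ Ioo τ₁ τ₂, HasDerivWithinAt (lyapunov y βhat b βstar)
      (2 * ⟪y x, -(βhat x * g x) • A x (‖y x‖⁻¹ • y x) - A x (y x) + fbar x⟫
        + b * (2 * (βhat x - βstar) * (g x * ‖y x‖))) (Ioi x) x := fun x hx =>
    (hasDerivWithinAt_lyapunov (hy' x (hIoo hx)) (hβ' x (hIoo hx))).mono
      (Ioi_subset_Ici (h₁.trans hx.1.le))
  have hy_cont : ContinuousOn y (Icc τ₁ τ₂) := fun τ hτ =>
    (hy' τ (hIcc hτ)).continuousWithinAt.mono hIcc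
  have hβ_cont : ContinuousOn βhat (Icc τ₁ τ₂) := fun τ hτ =>
    (hβ' τ (hIcc hτ)).continuousWithinAt.mono hIcc
  have hsq_cont : ContinuousOn (fun s => ‖y s‖ ^ 2) (Icc τ₁ τ₂) := hy_cont.norm.pow 2
  have hV_le : lyapunov y βhat b βstar τ₂ - lyapunov y βhat b βstar τ₁ ≤
      ∫ s in τ₁..τ₂, -(2 * b) * ‖y s‖ ^ 2 :=
    intervalIntegral.sub_le_integral_of_hasDeriv_right_of_le h₁₂
      (hsq_cont.add (continuousOn_const.mul ((hβ_cont.sub continuousOn_const).pow 2))) hV'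
      (continuousOn_const.mul hsq_cont).integrableOn_Icc
      fun x hx => lyapunov_derivative_le (hA x (hIoo hx)) (hβ_nonneg x (hIoo hx))
        (hg x (hIoo hx)) (y x) (fbar x) (hfbar x (hIoo hx))
  rw [intervalIntegral.integral_const_mul] at hV_le
  linarith

end

theorem statement9_general {m : ℕ} (α Tc d q₁ : ℝ)
    (hα : 0 < α) (hTc : 0 < Tc) (hq₁ : -1 < q₁)
    (y : ℝ → EuclideanSpace ℝ (Fin m)) (βhat : ℝ → ℝ)
    (Δ : ℝ → EuclideanSpace ℝ (Fin m) →L[ℝ] EuclideanSpace ℝ (Fin m))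
    (fbar : ℝ → EuclideanSpace ℝ (Fin m))
    (hβ0 : 0 ≤ βhat 0)
    (hβ' : ∀ τ ∈ Set.Ici (0 : ℝ),
      HasDerivWithinAt βhat (α * Tc * Real.exp (-α * τ) * ‖y τ‖) (Set.Ici 0) τ)
    (hy' : ∀ τ ∈ Set.Ici (0 : ℝ),
      HasDerivWithinAt y
        (-(βhat τ * (α * Tc * Real.exp (-α * τ))) •
            ((ContinuousLinearMap.id ℝ (EuclideanSpace ℝ (Fin m)) + Δ τ) (‖y τ‖⁻¹ • y τ))
          - (ContinuousLinearMap.id ℝ (EuclideanSpace ℝ (Fin m)) + Δ τ) (y τ)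
          + fbar τ) (Set.Ici 0) τ)
    (hΔ : ∀ τ ∈ Set.Ici (0 : ℝ), RayleighLB (Δ τ) q₁)
    (hfbar : ∀ τ ∈ Set.Ici (0 : ℝ), ‖fbar τ‖ ≤ α * Tc * Real.exp (-α * τ) * d) :
    (∀ τ₁ τ₂ : ℝ, 0 ≤ τ₁ → τ₁ ≤ τ₂ →
      (‖y τ₂‖ ^ 2 + (1 + q₁) * (βhat τ₂ - d / (1 + q₁)) ^ 2)
        + 2 * (1 + q₁) * ∫ s in τ₁..τ₂, ‖y s‖ ^ 2 ≤
      ‖y τ₁‖ ^ 2 + (1 + q₁) * (βhat τ₁ - d / (1 + q₁)) ^ 2) ∧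
    AntitoneOn (fun τ => ‖y τ‖ ^ 2 + (1 + q₁) * (βhat τ - d / (1 + q₁)) ^ 2)
      (Set.Ici 0) := by
  have hb : 0 < 1 + q₁ := by linarith
  have hd : d = (1 + q₁) * (d / (1 + q₁)) := (mul_div_cancel₀ d hb.ne').symm
  have dissipation : ∀ τ₁ τ₂ : ℝ, 0 ≤ τ₁ → τ₁ ≤ τ₂ →
      lyapunov y βhat (1 + q₁) (d / (1 + q₁)) τ₂ + 2 * (1 + q₁) * ∫ s in τ₁..τ₂, ‖y s‖ ^ 2 ≤
        lyapunov y βhat (1 + q₁) (d / (1 + q₁)) τ₁ := fun τ₁ τ₂ h₁ h₁₂ =>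
    lyapunov_add_integral_le (g := fun τ => α * Tc * Real.exp (-α * τ))
      (A := fun τ => ContinuousLinearMap.id ℝ _ + Δ τ) (fun τ _ => by positivity) hβ0 hβ' hy'
      (fun τ hτ => (hΔ τ hτ).mul_norm_sq_le_inner_id_add)
      (fun τ hτ => hd ▸ hfbar τ hτ) h₁ h₁₂
  refine ⟨dissipation, fun τ₁ h₁ τ₂ _ h₁₂ => ?_⟩
  have hint : 0 ≤ ∫ s in τ₁..τ₂, ‖y s‖ ^ 2 :=
    intervalIntegral.integral_nonneg h₁₂ fun s _ => by positivity
  have h := dissipation τ₁ τ₂ h₁ h₁₂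
  unfold lyapunov at h
  linarith [mul_nonneg (by linarith : (0 : ℝ) ≤ 2 * (1 + q₁)) hint]

theorem statement9 {m : ℕ} (hm : 1 ≤ m) (α Tc d q₁ : ℝ)
    (hα : 0 < α) (hTc : 0 < Tc) (hd : 0 ≤ d) (hq₁ : -1 < q₁)
    (y : ℝ → EuclideanSpace ℝ (Fin m)) (βhat : ℝ → ℝ)
    (Δ : ℝ → EuclideanSpace ℝ (Fin m) →L[ℝ] EuclideanSpace ℝ (Fin m))
    (fbar : ℝ → EuclideanSpace ℝ (Fin m))
    (hy0 : ∀ τ ∈ Set.Ici (0 : ℝ), y τ ≠ 0)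
    (hβ0 : 0 ≤ βhat 0)
    (hβ' : ∀ τ ∈ Set.Ici (0 : ℝ),
      HasDerivWithinAt βhat (α * Tc * Real.exp (-α * τ) * ‖y τ‖) (Set.Ici 0) τ)
    (hy' : ∀ τ ∈ Set.Ici (0 : ℝ),
      HasDerivWithinAt y
        (-(βhat τ * (α * Tc * Real.exp (-α * τ))) •
            ((ContinuousLinearMap.id ℝ (EuclideanSpace ℝ (Fin m)) + Δ τ) (‖y τ‖⁻¹ • y τ))
          - (ContinuousLinearMap.id ℝ (EuclideanSpace ℝ (Fin m)) + Δ τ) (y τ)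
          + fbar τ) (Set.Ici 0) τ)
    (hΔ : ∀ τ ∈ Set.Ici (0 : ℝ), RayleighLB (Δ τ) q₁)
    (hfbar : ∀ τ ∈ Set.Ici (0 : ℝ), ‖fbar τ‖ ≤ α * Tc * Real.exp (-α * τ) * d) :
    (∀ τ₁ τ₂ : ℝ, 0 ≤ τ₁ → τ₁ ≤ τ₂ →
      (‖y τ₂‖ ^ 2 + (1 + q₁) * (βhat τ₂ - d / (1 + q₁)) ^ 2)
        + 2 * (1 + q₁) * ∫ s in τ₁..τ₂, ‖y s‖ ^ 2 ≤
      ‖y τ₁‖ ^ 2 + (1 + q₁) * (βhat τ₁ - d / (1 + q₁)) ^ 2) ∧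
    AntitoneOn (fun τ => ‖y τ‖ ^ 2 + (1 + q₁) * (βhat τ - d / (1 + q₁)) ^ 2)
      (Set.Ici 0) :=
  statement9_general α Tc d q₁ hα hTc hq₁ y βhat Δ fbar hβ0 hβ' hy' hΔ hfbar
end

section
/- Let m ≥ 1, α > 0, T_c > 0, d ≥ 0, q₁ > −1 and 0 ≤ q < 1. Let y : [0, ∞) → ℝᵐ and β̂ : [0, ∞) → ℝ be differentiable with y(τ) ≠ 0 for all τ, β̂(0) ≥ 0, β̂'(τ) = α·T_c·e^{−ατ}·‖y(τ)‖, and y'(τ) = −β̂(τ)·α·T_c·e^{−ατ}·(I + Δ(τ))(y(τ)/‖y(τ)‖) − (I + Δ(τ))y(τ) + f̄(τ), where each Δ(τ) satisfies the Rayleigh lower bound q₁, the operator norm of each Δ(τ) is at most q, and ‖f̄(τ)‖ ≤ α·T_c·e^{−ατ}·d. Then ‖y(τ)‖ → 0 as τ → ∞. -/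
/-!
Write `r = ‖y‖`. Since `I + Δ` is coercive with constant `c = 1 + q₁ > 0` and `β̂ ≥ 0`
(it is nondecreasing), the term in `β̂` only pushes `y` towards the origin and
`r' = ⟨y, y'⟩ / r ≤ -c r + α T_c d e^{-ατ}`. For `0 < μ ≤ c`, `μ < α`, the function
`e^{μτ} r + α T_c d/(α - μ) · e^{(μ - α)τ}` is then nonincreasing, so `r = O(e^{-μτ})`.
-/

open Real Set Filter Topology InnerProductSpace

theorem HasDerivWithinAt.norm {F : Type*} [NormedAddCommGroup F] [InnerProductSpace ℝ F]
    {f : ℝ → F} {f' : F} {s : Set ℝ} {x : ℝ} (hf : HasDerivWithinAt f f' s x) (h0 : f x ≠ 0) :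
    HasDerivWithinAt (‖f ·‖) (⟪f x, f'⟫_ℝ / ‖f x‖) s x := by
  have hpos : 0 < ‖f x‖ := norm_pos_iff.mpr h0
  have h := hf.norm_sq.sqrt (by positivity)
  simp only [sqrt_sq (norm_nonneg _)] at h
  convert h using 1
  field_simp

section Decay

variable {r r' : ℝ → ℝ} {c α K : ℝ}

theorem le_mul_exp_of_hasDerivWithinAt_le {μ : ℝ} (hμc : μ ≤ c) (hμα : μ < α) (hK : 0 ≤ K)
    (hr0 : ∀ τ ∈ Ici (0 : ℝ), 0 ≤ r τ)
    (hr : ∀ τ ∈ Ici (0 : ℝ), HasDerivWithinAt r (r' τ) (Ici 0) τ)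
    (hr' : ∀ τ ∈ Ici (0 : ℝ), r' τ ≤ -c * r τ + K * exp (-α * τ))
    {τ : ℝ} (hτ : 0 ≤ τ) :
    r τ ≤ (r 0 + K / (α - μ)) * exp (-μ * τ) := by
  have hαμ : 0 < α - μ := sub_pos.mpr hμα
  set g : ℝ → ℝ := fun t => exp (μ * t) * r t + K / (α - μ) * exp ((μ - α) * t) with hg
  have hexp (a t : ℝ) : HasDerivWithinAt (fun t => exp (a * t)) (exp (a * t) * a) (Ici 0) t := by
    simpa using (((hasDerivAt_id t).const_mul a).exp).hasDerivWithinAt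
  set g' : ℝ → ℝ := fun t => exp (μ * t) * μ * r t + exp (μ * t) * r' t - K * exp ((μ - α) * t)
  have hg' : ∀ t ∈ Ici (0 : ℝ), HasDerivWithinAt g (g' t) (Ici 0) t := by
    intro t ht
    refine (((hexp μ t).mul (hr t ht)).add
      ((hexp (μ - α) t).const_mul (K / (α - μ)))).congr_deriv ?_
    simp only [g']
    field_simp
    ring
  have hg'_nonpos : ∀ t ∈ Ici (0 : ℝ), g' t ≤ 0 := by
    intro t ht
    have hsplit : exp (μ * t) * exp (-α * t) = exp ((μ - α) * t) := by
      rw [← exp_add]; ring_nf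
    have hdamp : exp (μ * t) * ((μ - c) * r t) ≤ 0 :=
      mul_nonpos_of_nonneg_of_nonpos (exp_pos _).le
        (mul_nonpos_of_nonpos_of_nonneg (by linarith) (hr0 t ht))
    have hr't := mul_le_mul_of_nonneg_left (hr' t ht) (exp_pos (μ * t)).le
    linear_combination hr't + hdamp + K * hsplit
  have hanti : AntitoneOn g (Ici 0) :=
    antitoneOn_of_hasDerivWithinAt_nonpos (convex_Ici 0)
      (fun t ht => (hg' t ht).continuousWithinAt)
      (fun t ht => (hg' t (interior_subset ht)).mono interior_subset)
      (fun t ht => hg'_nonpos t (interior_subset ht))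
  have hgτ : exp (μ * τ) * r τ ≤ r 0 + K / (α - μ) := by
    have hmono := hanti self_mem_Ici hτ hτ
    simp only [hg, mul_zero, exp_zero, one_mul, mul_one] at hmono
    have htail : 0 ≤ K / (α - μ) * exp ((μ - α) * τ) := by positivity
    linarith
  calc r τ = exp (μ * τ) * r τ * exp (-μ * τ) := by
        rw [mul_right_comm, ← exp_add, neg_mul, add_neg_cancel, exp_zero, one_mul]
    _ ≤ (r 0 + K / (α - μ)) * exp (-μ * τ) :=
        mul_le_mul_of_nonneg_right hgτ (exp_pos _).le

theorem tendsto_zero_of_hasDerivWithinAt_le (hc : 0 < c) (hα : 0 < α) (hK : 0 ≤ K)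
    (hr0 : ∀ τ ∈ Ici (0 : ℝ), 0 ≤ r τ)
    (hr : ∀ τ ∈ Ici (0 : ℝ), HasDerivWithinAt r (r' τ) (Ici 0) τ)
    (hr' : ∀ τ ∈ Ici (0 : ℝ), r' τ ≤ -c * r τ + K * exp (-α * τ)) :
    Tendsto r atTop (𝓝 0) := by
  set μ := min c (α / 2)
  have hμ : 0 < μ := lt_min hc (half_pos hα)
  have hμc : μ ≤ c := min_le_left _ _
  have hμα : μ < α := (min_le_right _ _).trans_lt (half_lt_self hα)
  have hexp : Tendsto (fun τ => (r 0 + K / (α - μ)) * exp (-μ * τ)) atTop (𝓝 0) := by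
    simpa using (tendsto_exp_neg_atTop_nhds_zero.comp
      (tendsto_id.const_mul_atTop hμ)).const_mul (r 0 + K / (α - μ))
  refine squeeze_zero' ?_ ?_ hexp
  · filter_upwards [eventually_ge_atTop 0] with τ hτ using hr0 τ hτ
  · filter_upwards [eventually_ge_atTop 0] with τ hτ
    exact le_mul_exp_of_hasDerivWithinAt_le hμc hμα hK hr0 hr hr' hτ

end Decay

theorem inner_damped_field_le {E : Type*} [NormedAddCommGroup E] [InnerProductSpace ℝ E]
    {Δ : E →L[ℝ] E} {q₁ b : ℝ} {y f : E} (hΔ : q₁ * ‖y‖ ^ 2 ≤ ⟪y, Δ y⟫_ℝ) (hq₁ : -1 < q₁)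
    (hb : 0 ≤ b) :
    ⟪y, -b • (ContinuousLinearMap.id ℝ E + Δ) (‖y‖⁻¹ • y) - (ContinuousLinearMap.id ℝ E + Δ) y
      + f⟫_ℝ ≤ -(1 + q₁) * ‖y‖ ^ 2 + ‖y‖ * ‖f‖ := by
  have hcoercive : (1 + q₁) * ‖y‖ ^ 2 ≤ ⟪y, (ContinuousLinearMap.id ℝ E + Δ) y⟫_ℝ := by
    simp only [add_apply, ContinuousLinearMap.id_apply, inner_add_right,
      real_inner_self_eq_norm_sq]
    linarith
  have hdamping : 0 ≤ b * (‖y‖⁻¹ * ⟪y, (ContinuousLinearMap.id ℝ E + Δ) y⟫_ℝ) := by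
    have hsq : 0 ≤ (1 + q₁) * ‖y‖ ^ 2 := mul_nonneg (by linarith) (sq_nonneg _)
    exact mul_nonneg hb (mul_nonneg (inv_nonneg.mpr (norm_nonneg _)) (hsq.trans hcoercive))
  have hf := real_inner_le_norm y f
  simp only [inner_add_right, inner_sub_right, map_smul, real_inner_smul_right] at hdamping ⊢
  linarith

theorem statement12_general {m : ℕ} (α Tc d q₁ : ℝ)
    (hα : 0 < α) (hTc : 0 < Tc) (hd : 0 ≤ d) (hq₁ : -1 < q₁)
    (y : ℝ → EuclideanSpace ℝ (Fin m)) (βhat : ℝ → ℝ)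
    (Δ : ℝ → EuclideanSpace ℝ (Fin m) →L[ℝ] EuclideanSpace ℝ (Fin m))
    (fbar : ℝ → EuclideanSpace ℝ (Fin m))
    (hy0 : ∀ τ ∈ Set.Ici (0 : ℝ), y τ ≠ 0)
    (hβ0 : 0 ≤ βhat 0)
    (hβ' : ∀ τ ∈ Set.Ici (0 : ℝ),
      HasDerivWithinAt βhat (α * Tc * Real.exp (-α * τ) * ‖y τ‖) (Set.Ici 0) τ)
    (hy' : ∀ τ ∈ Set.Ici (0 : ℝ),
      HasDerivWithinAt y
        (-(βhat τ * (α * Tc * Real.exp (-α * τ))) •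
            ((ContinuousLinearMap.id ℝ (EuclideanSpace ℝ (Fin m)) + Δ τ) (‖y τ‖⁻¹ • y τ))
          - (ContinuousLinearMap.id ℝ (EuclideanSpace ℝ (Fin m)) + Δ τ) (y τ)
          + fbar τ) (Set.Ici 0) τ)
    (hΔ : ∀ τ ∈ Set.Ici (0 : ℝ), RayleighLB (Δ τ) q₁)
    (hfbar : ∀ τ ∈ Set.Ici (0 : ℝ), ‖fbar τ‖ ≤ α * Tc * Real.exp (-α * τ) * d) :
    Filter.Tendsto (fun τ => ‖y τ‖) Filter.atTop (nhds 0) := by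
  have hβ_mono : MonotoneOn βhat (Ici 0) :=
    monotoneOn_of_hasDerivWithinAt_nonneg (convex_Ici 0)
      (fun τ hτ => (hβ' τ hτ).continuousWithinAt)
      (fun τ hτ => (hβ' τ (interior_subset hτ)).mono interior_subset)
      (fun τ _ => by positivity)
  refine tendsto_zero_of_hasDerivWithinAt_le (c := 1 + q₁) (K := α * Tc * d) (by linarith) hα
    (by positivity) (fun τ _ => norm_nonneg _) (fun τ hτ => (hy' τ hτ).norm (hy0 τ hτ)) ?_
  intro τ hτ
  have hβ_nonneg : 0 ≤ βhat τ * (α * Tc * exp (-α * τ)) :=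
    mul_nonneg (hβ0.trans (hβ_mono self_mem_Ici hτ hτ)) (by positivity)
  have hy_pos : 0 < ‖y τ‖ := norm_pos_iff.mpr (hy0 τ hτ)
  have hinner := inner_damped_field_le (f := fbar τ) (hΔ τ hτ (y τ)) hq₁ hβ_nonneg
  have hforcing := mul_le_mul_of_nonneg_left (hfbar τ hτ) hy_pos.le
  rw [div_le_iff₀ hy_pos]
  linarith

theorem statement12 {m : ℕ} (hm : 1 ≤ m) (α Tc d q₁ : ℝ)
    (hα : 0 < α) (hTc : 0 < Tc) (hd : 0 ≤ d) (hq₁ : -1 < q₁) (q : ℝ) (hq0 : 0 ≤ q) (hq1 : q < 1)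
    (y : ℝ → EuclideanSpace ℝ (Fin m)) (βhat : ℝ → ℝ)
    (Δ : ℝ → EuclideanSpace ℝ (Fin m) →L[ℝ] EuclideanSpace ℝ (Fin m))
    (fbar : ℝ → EuclideanSpace ℝ (Fin m))
    (hy0 : ∀ τ ∈ Set.Ici (0 : ℝ), y τ ≠ 0)
    (hβ0 : 0 ≤ βhat 0)
    (hβ' : ∀ τ ∈ Set.Ici (0 : ℝ),
      HasDerivWithinAt βhat (α * Tc * Real.exp (-α * τ) * ‖y τ‖) (Set.Ici 0) τ)
    (hy' : ∀ τ ∈ Set.Ici (0 : ℝ),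
      HasDerivWithinAt y
        (-(βhat τ * (α * Tc * Real.exp (-α * τ))) •
            ((ContinuousLinearMap.id ℝ (EuclideanSpace ℝ (Fin m)) + Δ τ) (‖y τ‖⁻¹ • y τ))
          - (ContinuousLinearMap.id ℝ (EuclideanSpace ℝ (Fin m)) + Δ τ) (y τ)
          + fbar τ) (Set.Ici 0) τ)
    (hΔ : ∀ τ ∈ Set.Ici (0 : ℝ), RayleighLB (Δ τ) q₁)
    (hΔnorm : ∀ τ ∈ Set.Ici (0 : ℝ), ‖Δ τ‖ ≤ q)
    (hfbar : ∀ τ ∈ Set.Ici (0 : ℝ), ‖fbar τ‖ ≤ α * Tc * Real.exp (-α * τ) * d) :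
    Filter.Tendsto (fun τ => ‖y τ‖) Filter.atTop (nhds 0) :=
  statement12_general α Tc d q₁ hα hTc hd hq₁ y βhat Δ fbar hy0 hβ0 hβ' hy' hΔ hfbar
end

section
/- (Lemma 1, for classical solutions.) Let m ≥ 1, α ∈ (0, 1), T_c > 0, ε > 0, d ≥ 0, q₁ > −1 and 0 ≤ q < 1. Let σ : [0, T_c) → ℝᵐ and β̂ : [0, T_c) → ℝ be differentiable with ‖σ(0)‖ > ε/2, β̂(0) ≥ 0, β̂'(t) = ‖σ(t)‖ for all t, and such that at every t ∈ [0, T_c) with σ(t) ≠ 0 one has σ'(t) = −(β̂(t) + ‖σ(t)‖/(α(T_c − t)))·(I + Δ(t))(σ(t)/‖σ(t)‖) + f(t), where each Δ(t) satisfies the Rayleigh lower bound q₁, the operator norm of each Δ(t) is at most q, and ‖f(t)‖ ≤ d for all t. Then there exists t̄ ∈ (0, T_c) such that ‖σ(t̄)‖ = ε/2. -/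
open Set Filter Topology RealInnerProductSpace

section

variable {F : Type*} [NormedAddCommGroup F] [InnerProductSpace ℝ F]

theorem HasDerivAt.norm_of_ne_zero {f : ℝ → F} {f' : F} {x : ℝ} (hf : HasDerivAt f f' x)
    (h0 : f x ≠ 0) : HasDerivAt (‖f ·‖) (⟪f x, f'⟫ / ‖f x‖) x := by
  have hpos : 0 < ‖f x‖ := norm_pos_iff.mpr h0
  convert hf.norm_sq.sqrt (by positivity) using 1
  · simp only [Real.sqrt_sq (norm_nonneg _)]
  · rw [Real.sqrt_sq hpos.le]
    field_simp

theorem mul_norm_le_inner_id_add_apply_inv_norm_smul {L : F →L[ℝ] F} {q₁ : ℝ} (x : F)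
    (hL : q₁ * ‖x‖ ^ 2 ≤ ⟪x, L x⟫) :
    (1 + q₁) * ‖x‖ ≤ ⟪x, (ContinuousLinearMap.id ℝ F + L) (‖x‖⁻¹ • x)⟫ := by
  rcases eq_or_ne x 0 with rfl | hx
  · simp
  have hpos : 0 < ‖x‖ := norm_pos_iff.mpr hx
  have hexpand : ⟪x, (ContinuousLinearMap.id ℝ F + L) (‖x‖⁻¹ • x)⟫
      = (‖x‖ ^ 2 + ⟪x, L x⟫) / ‖x‖ := by
    simp only [add_apply, ContinuousLinearMap.id_apply, map_smul,
      inner_add_right, real_inner_smul_right, real_inner_self_eq_norm_sq]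
    ring
  rw [hexpand, le_div_iff₀ hpos]
  nlinarith

theorem inner_neg_smul_add_div_norm_le {x u w : F} {c k : ℝ} (hx : x ≠ 0) (hk : 0 ≤ k)
    (hu : c * ‖x‖ ≤ ⟪x, u⟫) : ⟪x, -k • u + w⟫ / ‖x‖ ≤ ‖w‖ - k * c := by
  have hpos : 0 < ‖x‖ := norm_pos_iff.mpr hx
  rw [div_le_iff₀ hpos, inner_add_right, real_inner_smul_right]
  nlinarith [real_inner_le_norm x w, mul_le_mul_of_nonneg_left hu hk]

end

theorem tendsto_log_sub_nhdsLT (T : ℝ) : Tendsto (fun t => Real.log (T - t)) (𝓝[<] T) atBot := by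
  refine Real.tendsto_log_nhdsGT_zero.comp (tendsto_nhdsWithin_iff.mpr ⟨?_, ?_⟩)
  · simpa using ((continuous_sub_left T).tendsto T).mono_left nhdsWithin_le_nhds
  · filter_upwards [self_mem_nhdsWithin] with t ht
    exact sub_pos.mpr (show t < T from ht)

theorem tendsto_atBot_of_hasDerivAt_le_sub_div {φ φ' : ℝ → ℝ} {a T d c : ℝ} (haT : a < T)
    (hc : 0 < c) (hφ : ∀ t ∈ Ioo a T, HasDerivAt φ (φ' t) t)
    (hφ' : ∀ t ∈ Ioo a T, φ' t ≤ d - c / (T - t)) : Tendsto φ (𝓝[<] T) atBot := by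
  set g : ℝ → ℝ := fun s => φ s - d * s - c * Real.log (T - s)
  have hg : ∀ t ∈ Ioo a T, HasDerivAt g (φ' t - d * 1 - c * (-1 / (T - t))) t := by
    intro t ht
    have hlog : HasDerivAt (fun s => Real.log (T - s)) (-1 / (T - t)) t :=
      ((hasDerivAt_id t).const_sub T).log (sub_ne_zero.mpr ht.2.ne')
    exact ((hφ t ht).sub ((hasDerivAt_id t).const_mul d)).sub (hlog.const_mul c)
  have hanti : AntitoneOn g (Ioo a T) := by
    refine antitoneOn_of_hasDerivWithinAt_nonpos (convex_Ioo a T)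
      (f' := fun t => φ' t - d * 1 - c * (-1 / (T - t)))
      (fun t ht => (hg t ht).continuousAt.continuousWithinAt) (fun t ht => ?_) (fun t ht => ?_)
    · rw [interior_Ioo] at ht ⊢
      exact (hg t ht).hasDerivWithinAt
    · rw [interior_Ioo] at ht
      have hlog : c * (-1 / (T - t)) = -(c / (T - t)) := by ring
      linarith [hφ' t ht]
  obtain ⟨s, hs⟩ := nonempty_Ioo.mpr haT
  have hupper : Tendsto (fun t => (g s + d * t) + c * Real.log (T - t)) (𝓝[<] T) atBot :=
    Tendsto.add_atBot (tendsto_const_nhds.add ((continuous_const_mul d).tendsto T |>.mono_left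
      nhdsWithin_le_nhds)) ((tendsto_log_sub_nhdsLT T).const_mul_atBot hc)
  refine tendsto_atBot_mono' _ ?_ hupper
  filter_upwards [Ioo_mem_nhdsLT hs.2] with t ht
  have := hanti hs ⟨hs.1.trans ht.1, ht.2⟩ ht.1.le
  simp only [g] at this
  linarith

theorem forall_lt_of_continuousOn_Ico_of_ne {g : ℝ → ℝ} {a T b : ℝ}
    (hg : ContinuousOn g (Ico a T)) (ha : b < g a) (hne : ∀ t ∈ Ioo a T, g t ≠ b) :
    ∀ t ∈ Ico a T, b < g t := by
  intro t ht
  by_contra! hle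
  obtain ⟨s, hs, hgs⟩ := isPreconnected_Ico.intermediate_value ht
    (left_mem_Ico.mpr (ht.1.trans_lt ht.2)) hg ⟨hle, ha.le⟩
  have hsa : s ≠ a := by rintro rfl; exact ha.ne' hgs
  exact hne s ⟨lt_of_le_of_ne hs.1 hsa.symm, hs.2⟩ hgs

theorem monotoneOn_Ico_of_hasDerivWithinAt_nonneg {f f' : ℝ → ℝ} {a T : ℝ}
    (hf : ∀ t ∈ Ico a T, HasDerivWithinAt f (f' t) (Ico a T) t)
    (hf' : ∀ t ∈ Ico a T, 0 ≤ f' t) : MonotoneOn f (Ico a T) :=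
  monotoneOn_of_hasDerivWithinAt_nonneg (convex_Ico a T) (fun t ht => (hf t ht).continuousWithinAt)
    (fun t ht => (hf t (interior_subset ht)).mono interior_subset)
    (fun t ht => hf' t (interior_subset ht))

theorem statement13_general {m : ℕ} (α Tc ε d q₁ : ℝ)
    (hα : α ∈ Set.Ioo (0 : ℝ) 1) (hTc : 0 < Tc) (hε : 0 < ε)
    (hq₁ : -1 < q₁)
    (σ : ℝ → EuclideanSpace ℝ (Fin m)) (βhat : ℝ → ℝ)
    (Δ : ℝ → EuclideanSpace ℝ (Fin m) →L[ℝ] EuclideanSpace ℝ (Fin m))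
    (f : ℝ → EuclideanSpace ℝ (Fin m))
    (hσ0 : ε / 2 < ‖σ 0‖) (hβ0 : 0 ≤ βhat 0)
    (hσdiff : DifferentiableOn ℝ σ (Set.Ico 0 Tc))
    (hβ' : ∀ t ∈ Set.Ico (0 : ℝ) Tc,
      HasDerivWithinAt βhat ‖σ t‖ (Set.Ico 0 Tc) t)
    (hσ' : ∀ t ∈ Set.Ico (0 : ℝ) Tc, σ t ≠ 0 →
      HasDerivWithinAt σ
        (-(βhat t + ‖σ t‖ / (α * (Tc - t))) •
            ((ContinuousLinearMap.id ℝ (EuclideanSpace ℝ (Fin m)) + Δ t)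
              (‖σ t‖⁻¹ • σ t)) + f t) (Set.Ico 0 Tc) t)
    (hΔ : ∀ t ∈ Set.Ico (0 : ℝ) Tc, RayleighLB (Δ t) q₁)
    (hf : ∀ t ∈ Set.Ico (0 : ℝ) Tc, ‖f t‖ ≤ d) :
    ∃ tbar ∈ Set.Ioo (0 : ℝ) Tc, ‖σ tbar‖ = ε / 2 := by
  obtain ⟨hα0, -⟩ := hα
  by_contra! hne
  have hbig : ∀ t ∈ Ico 0 Tc, ε / 2 < ‖σ t‖ :=
    forall_lt_of_continuousOn_Ico_of_ne hσdiff.continuousOn.norm hσ0 hne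
  have hβ : ∀ t ∈ Ico 0 Tc, 0 ≤ βhat t := fun t ht =>
    hβ0.trans (monotoneOn_Ico_of_hasDerivWithinAt_nonneg hβ' (fun _ _ => norm_nonneg _)
      (left_mem_Ico.mpr hTc) ht ht.1)
  have hq : 0 < 1 + q₁ := by linarith
  set gain : ℝ → ℝ := fun t => βhat t + ‖σ t‖ / (α * (Tc - t))
  set c := (1 + q₁) * (ε / 2) / α
  have hgain : ∀ t ∈ Ioo 0 Tc, σ t ≠ 0 ∧ 0 ≤ gain t ∧ c / (Tc - t) ≤ gain t * (1 + q₁) := by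
    intro t ht
    have hτ : 0 < Tc - t := sub_pos.mpr ht.2
    have hn := hbig t (Ioo_subset_Ico_self ht)
    have hβt := hβ t (Ioo_subset_Ico_self ht)
    refine ⟨norm_pos_iff.mp (by linarith), by positivity, ?_⟩
    calc c / (Tc - t) = ε / 2 / (α * (Tc - t)) * (1 + q₁) := by
          simp only [c]; field_simp
      _ ≤ gain t * (1 + q₁) := by
        gcongr
        exact le_add_of_nonneg_of_le hβt (by gcongr)
  have htend : Tendsto (‖σ ·‖) (𝓝[<] Tc) atBot := by
    refine tendsto_atBot_of_hasDerivAt_le_sub_div (d := d) (c := c) hTc (by positivity)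
      (fun t ht => ((hσ' t (Ioo_subset_Ico_self ht) (hgain t ht).1).hasDerivAt
        (Ico_mem_nhds ht.1 ht.2)).norm_of_ne_zero (hgain t ht).1) (fun t ht => ?_)
    obtain ⟨hσt, hk, hc⟩ := hgain t ht
    have hI := Ioo_subset_Ico_self ht
    calc _ ≤ ‖f t‖ - gain t * (1 + q₁) := inner_neg_smul_add_div_norm_le hσt hk
          (mul_norm_le_inner_id_add_apply_inv_norm_smul (σ t) (hΔ t hI (σ t)))
      _ ≤ d - c / (Tc - t) := by linarith [hf t hI]
  obtain ⟨t, hlt, ht⟩ :=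
    ((htend.eventually (eventually_lt_atBot (ε / 2))).and (Ioo_mem_nhdsLT hTc)).exists
  exact (hbig t (Ioo_subset_Ico_self ht)).not_gt hlt

theorem statement13 {m : ℕ} (hm : 1 ≤ m) (α Tc ε d q₁ q : ℝ)
    (hα : α ∈ Set.Ioo (0 : ℝ) 1) (hTc : 0 < Tc) (hε : 0 < ε) (hd : 0 ≤ d)
    (hq₁ : -1 < q₁) (hq0 : 0 ≤ q) (hq1 : q < 1)
    (σ : ℝ → EuclideanSpace ℝ (Fin m)) (βhat : ℝ → ℝ)
    (Δ : ℝ → EuclideanSpace ℝ (Fin m) →L[ℝ] EuclideanSpace ℝ (Fin m))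
    (f : ℝ → EuclideanSpace ℝ (Fin m))
    (hσ0 : ε / 2 < ‖σ 0‖) (hβ0 : 0 ≤ βhat 0)
    (hσdiff : DifferentiableOn ℝ σ (Set.Ico 0 Tc))
    (hβ' : ∀ t ∈ Set.Ico (0 : ℝ) Tc,
      HasDerivWithinAt βhat ‖σ t‖ (Set.Ico 0 Tc) t)
    (hσ' : ∀ t ∈ Set.Ico (0 : ℝ) Tc, σ t ≠ 0 →
      HasDerivWithinAt σ
        (-(βhat t + ‖σ t‖ / (α * (Tc - t))) •
            ((ContinuousLinearMap.id ℝ (EuclideanSpace ℝ (Fin m)) + Δ t)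
              (‖σ t‖⁻¹ • σ t)) + f t) (Set.Ico 0 Tc) t)
    (hΔ : ∀ t ∈ Set.Ico (0 : ℝ) Tc, RayleighLB (Δ t) q₁)
    (hΔnorm : ∀ t ∈ Set.Ico (0 : ℝ) Tc, ‖Δ t‖ ≤ q)
    (hf : ∀ t ∈ Set.Ico (0 : ℝ) Tc, ‖f t‖ ≤ d) :
    ∃ tbar ∈ Set.Ioo (0 : ℝ) Tc, ‖σ tbar‖ = ε / 2 :=
  statement13_general α Tc ε d q₁ hα hTc hε hq₁ σ βhat Δ f hσ0 hβ0 hσdiff hβ' hσ' hΔ hf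
end

section
/- Let m ≥ 1, ε > 0, d ≥ 0, q₁ > −1, b₀ = 1 + q₁, β* = d/b₀. Let σ ∈ ℝᵐ with σ ≠ 0 and ‖σ‖ < ε, let Δ be a real m×m matrix satisfying the Rayleigh lower bound q₁, and let f ∈ ℝᵐ with ‖f‖ ≤ d. Set K = K_psd(‖σ‖) = ‖σ‖/(ε − ‖σ‖), ζ = ε/(ε − ‖σ‖)², and σ̇ = −K·(I + Δ)(σ/‖σ‖) + f. Then ⟨σ, σ̇⟩ + ζ·K·⟨σ, σ̇⟩/‖σ‖ ≤ −b₀·(K − β*)·(‖σ‖ + ζ·K). -/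
/-!
Writing `r = ‖σ‖`, the Rayleigh bound gives `⟨σ, (I + Δ)σ⟩ ≥ (1 + q₁) r²` and Cauchy–Schwarz gives
`⟨σ, f⟩ ≤ r d`, so `⟨σ, σ̇⟩ ≤ r (d - (1 + q₁) K) = -(1 + q₁) (K - β*) r`. The left-hand side of the
claim is `⟨σ, σ̇⟩ (r + ζ K) / r`, and multiplying by the nonnegative factor `(r + ζ K) / r`
finishes the proof.
-/

namespace RayleighLB

variable {m : ℕ} {Δ : EuclideanSpace ℝ (Fin m) →L[ℝ] EuclideanSpace ℝ (Fin m)} {q₁ : ℝ}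

theorem one_add_mul_norm_sq_le_inner_id_add (hΔ : RayleighLB Δ q₁)
    (v : EuclideanSpace ℝ (Fin m)) :
    (1 + q₁) * ‖v‖ ^ 2 ≤
      inner ℝ v ((ContinuousLinearMap.id ℝ (EuclideanSpace ℝ (Fin m)) + Δ) v) := by
  rw [add_apply, ContinuousLinearMap.id_apply, inner_add_right, real_inner_self_eq_norm_sq]
  linarith [hΔ v]

theorem inner_neg_smul_id_add_unit_add_le (hΔ : RayleighLB Δ q₁) {K : ℝ} (hK : 0 ≤ K)
    (σ f : EuclideanSpace ℝ (Fin m)) :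
    inner ℝ σ (-K • (ContinuousLinearMap.id ℝ (EuclideanSpace ℝ (Fin m)) + Δ) (‖σ‖⁻¹ • σ) + f) ≤
      ‖σ‖ * (‖f‖ - (1 + q₁) * K) := by
  have hcoercive : (1 + q₁) * ‖σ‖ ≤
      inner ℝ σ ((ContinuousLinearMap.id ℝ (EuclideanSpace ℝ (Fin m)) + Δ) (‖σ‖⁻¹ • σ)) := by
    rw [map_smul, real_inner_smul_right]
    calc (1 + q₁) * ‖σ‖ = ‖σ‖⁻¹ * ((1 + q₁) * ‖σ‖ ^ 2) := by
          rcases eq_or_ne ‖σ‖ 0 with h | h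
          · simp [h]
          · field_simp
      _ ≤ _ := mul_le_mul_of_nonneg_left (hΔ.one_add_mul_norm_sq_le_inner_id_add σ)
          (by positivity)
  rw [inner_add_right, real_inner_smul_right]
  nlinarith [real_inner_le_norm σ f]

end RayleighLB

theorem add_mul_div_le_mul_add {x y r c : ℝ} (hr : 0 < r) (hc : 0 ≤ c) (hx : x ≤ r * y) :
    x + c * x / r ≤ y * (r + c) := by
  rw [← sub_nonneg]
  have : y * (r + c) - (x + c * x / r) = (r * y - x) * (r + c) / r := by field_simp
  rw [this]
  exact div_nonneg (mul_nonneg (sub_nonneg.mpr hx) (by linarith)) hr.le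

theorem statement14_general {m : ℕ} (ε d q₁ : ℝ)
    (hq₁ : -1 < q₁)
    (σ f σd : EuclideanSpace ℝ (Fin m))
    (Δ : EuclideanSpace ℝ (Fin m) →L[ℝ] EuclideanSpace ℝ (Fin m))
    (hσ : σ ≠ 0) (hσε : ‖σ‖ < ε) (hΔ : RayleighLB Δ q₁) (hf : ‖f‖ ≤ d)
    (hσd : σd = -(‖σ‖ / (ε - ‖σ‖)) •
        ((ContinuousLinearMap.id ℝ (EuclideanSpace ℝ (Fin m)) + Δ) (‖σ‖⁻¹ • σ)) + f) :
    (inner ℝ σ σd : ℝ) +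
        (ε / (ε - ‖σ‖) ^ 2) * (‖σ‖ / (ε - ‖σ‖)) * (inner ℝ σ σd : ℝ) / ‖σ‖ ≤
      -(1 + q₁) * (‖σ‖ / (ε - ‖σ‖) - d / (1 + q₁)) *
        (‖σ‖ + (ε / (ε - ‖σ‖) ^ 2) * (‖σ‖ / (ε - ‖σ‖))) := by
  have hr : 0 < ‖σ‖ := norm_pos_iff.mpr hσ
  have hεr : 0 < ε - ‖σ‖ := by linarith
  have hb : 1 + q₁ ≠ 0 := by linarith
  have hK : 0 ≤ ‖σ‖ / (ε - ‖σ‖) := div_nonneg hr.le hεr.le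
  have hinner : inner ℝ σ σd ≤ ‖σ‖ * (d - (1 + q₁) * (‖σ‖ / (ε - ‖σ‖))) := by
    rw [hσd]
    refine (hΔ.inner_neg_smul_id_add_unit_add_le hK σ f).trans ?_
    gcongr
  refine (add_mul_div_le_mul_add hr
    (mul_nonneg (div_nonneg (by linarith) (by positivity)) hK) hinner).trans_eq ?_
  field_simp
  ring

theorem statement14 {m : ℕ} (hm : 1 ≤ m) (ε d q₁ : ℝ)
    (hε : 0 < ε) (hd : 0 ≤ d) (hq₁ : -1 < q₁)
    (σ f σd : EuclideanSpace ℝ (Fin m))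
    (Δ : EuclideanSpace ℝ (Fin m) →L[ℝ] EuclideanSpace ℝ (Fin m))
    (hσ : σ ≠ 0) (hσε : ‖σ‖ < ε) (hΔ : RayleighLB Δ q₁) (hf : ‖f‖ ≤ d)
    (hσd : σd = -(‖σ‖ / (ε - ‖σ‖)) •
        ((ContinuousLinearMap.id ℝ (EuclideanSpace ℝ (Fin m)) + Δ) (‖σ‖⁻¹ • σ)) + f) :
    (inner ℝ σ σd : ℝ) +
        (ε / (ε - ‖σ‖) ^ 2) * (‖σ‖ / (ε - ‖σ‖)) * (inner ℝ σ σd : ℝ) / ‖σ‖ ≤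
      -(1 + q₁) * (‖σ‖ / (ε - ‖σ‖) - d / (1 + q₁)) *
        (‖σ‖ + (ε / (ε - ‖σ‖) ^ 2) * (‖σ‖ / (ε - ‖σ‖))) :=
  statement14_general ε d q₁ hq₁ σ f σd Δ hσ hσε hΔ hf hσd
end

section
/- Let m ≥ 1, ε > 0, β̄ > 0, d ≥ 0, q₁ > −1, b₀ = 1 + q₁, β* = d/b₀. Let σ ∈ ℝᵐ with σ ≠ 0 and ‖σ‖ < ε, let Δ be a real m×m matrix satisfying the Rayleigh lower bound q₁, and let f ∈ ℝᵐ with ‖f‖ ≤ d. Set K = K_pd(‖σ‖) = β̄·ε/(ε − ‖σ‖), ζ = β̄·ε/(ε − ‖σ‖)², and σ̇ = −K·(I + Δ)(σ/‖σ‖) + f. Then ⟨σ, σ̇⟩ + ζ·(K − β̄)·⟨σ, σ̇⟩/‖σ‖ ≤ −b₀·(K − β*)·(‖σ‖ + ζ·(K − β̄)). -/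
open RealInnerProductSpace

section Drift

variable {E : Type*} [NormedAddCommGroup E] [InnerProductSpace ℝ E]

lemma le_inner_one_add_apply_normalize {q₁ : ℝ} (σ : E) {Δ : E →L[ℝ] E}
    (hΔ : q₁ * ‖σ‖ ^ 2 ≤ ⟪σ, Δ σ⟫) :
    (1 + q₁) * ‖σ‖ ≤ ⟪σ, (ContinuousLinearMap.id ℝ E + Δ) (‖σ‖⁻¹ • σ)⟫ := by
  have hexpand : ⟪σ, (ContinuousLinearMap.id ℝ E + Δ) (‖σ‖⁻¹ • σ)⟫
      = ‖σ‖⁻¹ * (‖σ‖ ^ 2 + ⟪σ, Δ σ⟫) := by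
    rw [add_apply, ContinuousLinearMap.id_apply, map_smul, ← smul_add,
      real_inner_smul_right, inner_add_right, real_inner_self_eq_norm_sq]
  have hcancel : ‖σ‖⁻¹ * ((1 + q₁) * ‖σ‖ ^ 2) = (1 + q₁) * ‖σ‖ := by
    rcases (norm_nonneg σ).eq_or_lt with h | h
    · simp [← h]
    · field_simp
  rw [hexpand, ← hcancel]
  gcongr
  linarith

lemma inner_neg_smul_one_add_apply_normalize_add_le {q₁ K : ℝ} (hK : 0 ≤ K) (σ f : E)
    {Δ : E →L[ℝ] E} (hΔ : q₁ * ‖σ‖ ^ 2 ≤ ⟪σ, Δ σ⟫) :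
    ⟪σ, -K • (ContinuousLinearMap.id ℝ E + Δ) (‖σ‖⁻¹ • σ) + f⟫
      ≤ (-(1 + q₁) * K + ‖f‖) * ‖σ‖ := by
  have hdrift := le_inner_one_add_apply_normalize σ hΔ
  have hforce : ⟪σ, f⟫ ≤ ‖σ‖ * ‖f‖ := real_inner_le_norm σ f
  rw [inner_add_right, real_inner_smul_right]
  nlinarith [mul_le_mul_of_nonneg_left hdrift hK]

end Drift

lemma le_div_sub_of_lt {β ε r : ℝ} (hβ : 0 ≤ β) (hr : 0 ≤ r) (hrε : r < ε) :
    β ≤ β * ε / (ε - r) := by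
  rw [le_div_iff₀ (sub_pos.mpr hrε)]
  nlinarith

lemma add_mul_div_le_mul_add_s15 {A c s t : ℝ} (hA : A ≤ c * s) (hs : 0 < s) (ht : 0 ≤ t) :
    A + t * A / s ≤ c * (s + t) := by
  have hAs : A / s ≤ c := (div_le_iff₀ hs).mpr hA
  calc A + t * A / s = A / s * (s + t) := by field_simp
    _ ≤ c * (s + t) := by gcongr

theorem statement15_general {m : ℕ} (ε βbar d q₁ : ℝ)
    (hβbar : 0 < βbar) (hq₁ : -1 < q₁)
    (σ f σd : EuclideanSpace ℝ (Fin m))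
    (Δ : EuclideanSpace ℝ (Fin m) →L[ℝ] EuclideanSpace ℝ (Fin m))
    (hσ : σ ≠ 0) (hσε : ‖σ‖ < ε) (hΔ : RayleighLB Δ q₁) (hf : ‖f‖ ≤ d)
    (hσd : σd = -(βbar * ε / (ε - ‖σ‖)) •
        ((ContinuousLinearMap.id ℝ (EuclideanSpace ℝ (Fin m)) + Δ) (‖σ‖⁻¹ • σ)) + f) :
    (inner ℝ σ σd : ℝ) +
        (βbar * ε / (ε - ‖σ‖) ^ 2) * (βbar * ε / (ε - ‖σ‖) - βbar) *
          (inner ℝ σ σd : ℝ) / ‖σ‖ ≤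
      -(1 + q₁) * (βbar * ε / (ε - ‖σ‖) - d / (1 + q₁)) *
        (‖σ‖ + (βbar * ε / (ε - ‖σ‖) ^ 2) * (βbar * ε / (ε - ‖σ‖) - βbar)) := by
  have hs : 0 < ‖σ‖ := norm_pos_iff.mpr hσ
  have hK : βbar ≤ βbar * ε / (ε - ‖σ‖) := le_div_sub_of_lt hβbar.le hs.le hσε
  have hζ : 0 ≤ βbar * ε / (ε - ‖σ‖) ^ 2 := by
    have : 0 < ε := hs.trans hσε
    positivity
  have hinner : ⟪σ, σd⟫ ≤ (-(1 + q₁) * (βbar * ε / (ε - ‖σ‖)) + d) * ‖σ‖ := by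
    rw [hσd]
    refine (inner_neg_smul_one_add_apply_normalize_add_le (hβbar.le.trans hK) σ f
      (hΔ σ)).trans ?_
    gcongr
  have hrhs : -(1 + q₁) * (βbar * ε / (ε - ‖σ‖) - d / (1 + q₁))
      = -(1 + q₁) * (βbar * ε / (ε - ‖σ‖)) + d := by
    field_simp [(by linarith : (1 + q₁) ≠ 0)]
    ring
  rw [hrhs]
  exact add_mul_div_le_mul_add_s15 hinner hs (mul_nonneg hζ (sub_nonneg.mpr hK))

theorem statement15 {m : ℕ} (hm : 1 ≤ m) (ε βbar d q₁ : ℝ)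
    (hε : 0 < ε) (hβbar : 0 < βbar) (hd : 0 ≤ d) (hq₁ : -1 < q₁)
    (σ f σd : EuclideanSpace ℝ (Fin m))
    (Δ : EuclideanSpace ℝ (Fin m) →L[ℝ] EuclideanSpace ℝ (Fin m))
    (hσ : σ ≠ 0) (hσε : ‖σ‖ < ε) (hΔ : RayleighLB Δ q₁) (hf : ‖f‖ ≤ d)
    (hσd : σd = -(βbar * ε / (ε - ‖σ‖)) •
        ((ContinuousLinearMap.id ℝ (EuclideanSpace ℝ (Fin m)) + Δ) (‖σ‖⁻¹ • σ)) + f) :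
    (inner ℝ σ σd : ℝ) +
        (βbar * ε / (ε - ‖σ‖) ^ 2) * (βbar * ε / (ε - ‖σ‖) - βbar) *
          (inner ℝ σ σd : ℝ) / ‖σ‖ ≤
      -(1 + q₁) * (βbar * ε / (ε - ‖σ‖) - d / (1 + q₁)) *
        (‖σ‖ + (βbar * ε / (ε - ‖σ‖) ^ 2) * (βbar * ε / (ε - ‖σ‖) - βbar)) :=
  statement15_general ε βbar d q₁ hβbar hq₁ σ f σd Δ hσ hσε hΔ hf hσd
end

section
/- (Finite-time comparison lemma.) Let c > 0, a ∈ ℝ, and let V : [a, ∞) → ℝ be differentiable with V(t) ≥ 0 for all t ≥ a and V'(t) ≤ −c·√(V(t)) for all t ≥ a. Then V(t) = 0 for every t ≥ a + 2·√(V(a))/c. -/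
open Set

theorem antitoneOn_of_forall_hasDerivWithinAt_nonpos {f f' : ℝ → ℝ} {D : Set ℝ}
    (hD : Convex ℝ D) (hf : ∀ x ∈ D, HasDerivWithinAt f (f' x) D x)
    (hf' : ∀ x ∈ D, f' x ≤ 0) : AntitoneOn f D :=
  antitoneOn_of_hasDerivWithinAt_nonpos hD (fun x hx => (hf x hx).continuousWithinAt)
    (fun x hx => (hf x (interior_subset hx)).mono interior_subset)
    (fun x hx => hf' x (interior_subset hx))

/-- Where `V > 0`, `(√V)' = V' / (2 √V) ≤ -c / 2`. -/
theorem sqrt_le_sub_mul_of_deriv_le_neg_mul_sqrt {V V' : ℝ → ℝ} {a b c : ℝ} (hab : a ≤ b)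
    (hV : ∀ t ∈ Icc a b, HasDerivWithinAt V (V' t) (Icc a b) t)
    (hpos : ∀ t ∈ Icc a b, 0 < V t) (hdecay : ∀ t ∈ Icc a b, V' t ≤ -c * √(V t)) :
    √(V b) ≤ √(V a) - c / 2 * (b - a) := by
  have hanti : AntitoneOn (fun t => √(V t) + c / 2 * t) (Icc a b) := by
    refine antitoneOn_of_forall_hasDerivWithinAt_nonpos (convex_Icc a b)
      (f' := fun t => V' t / (2 * √(V t)) + c / 2) (fun t ht => ?_) (fun t ht => ?_)
    · have hlin : HasDerivWithinAt (fun s => c / 2 * s) (c / 2) (Icc a b) t := by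
        simpa using ((hasDerivAt_id t).const_mul (c / 2)).hasDerivWithinAt
      exact ((hV t ht).sqrt (hpos t ht).ne').add hlin
    · have hsqrt : 0 < 2 * √(V t) := by positivity [Real.sqrt_pos.2 (hpos t ht)]
      have : V' t / (2 * √(V t)) ≤ -c / 2 := by
        rw [div_le_iff₀ hsqrt]
        linarith [hdecay t ht]
      linarith
  have := hanti (left_mem_Icc.2 hab) (right_mem_Icc.2 hab) hab
  simp only at this
  linarith

theorem statement16 (c a : ℝ) (hc : 0 < c) (V V' : ℝ → ℝ)
    (hVpos : ∀ t ≥ a, 0 ≤ V t)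
    (hVderiv : ∀ t ≥ a, HasDerivWithinAt V (V' t) (Set.Ici a) t)
    (hVdecay : ∀ t ≥ a, V' t ≤ -c * Real.sqrt (V t)) :
    ∀ t ≥ a + 2 * Real.sqrt (V a) / c, V t = 0 := by
  intro t ht
  have hat : a ≤ t := le_trans (le_add_of_nonneg_right (by positivity)) ht
  have hanti : AntitoneOn V (Ici a) :=
    antitoneOn_of_forall_hasDerivWithinAt_nonpos (convex_Ici a) hVderiv fun s hs =>
      (hVdecay s hs).trans (by nlinarith [Real.sqrt_nonneg (V s)])
  by_contra hne
  have hVt : 0 < V t := (hVpos t hat).lt_of_ne' hne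
  have hsqrt_decay := sqrt_le_sub_mul_of_deriv_le_neg_mul_sqrt hat
    (fun s hs => (hVderiv s hs.1).mono Icc_subset_Ici_self)
    (fun s hs => hVt.trans_le (hanti hs.1 hat hs.2)) (fun s hs => hVdecay s hs.1)
  have hlate : 2 * √(V a) ≤ c * (t - a) := (div_le_iff₀' hc).1 (by linarith)
  linarith [Real.sqrt_pos.2 hVt]
end

section
/- (Forward invariance under the positive definite barrier gain.) Let m ≥ 1, ε > 0, β̄ > 0, d ≥ 0, q₁ > −1, b₀ = 1 + q₁, β* = d/b₀, and assume β̄ < β*; set s = ε(1 − β̄/β*). Let t₀ ∈ ℝ and let σ : [t₀, ∞) → ℝᵐ be differentiable with ‖σ(t₀)‖ ≤ s, such that at every t ≥ t₀ with σ(t) ≠ 0 and ‖σ(t)‖ < ε one has σ'(t) = −K_pd(‖σ(t)‖)·(I + Δ(t))(σ(t)/‖σ(t)‖) + f(t), where each Δ(t) satisfies the Rayleigh lower bound q₁ and ‖f(t)‖ ≤ d for all t. Then ‖σ(t)‖ ≤ s for every t ≥ t₀. -/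
/-!
Every sphere `‖σ‖ = r` with `s < r < ε` is a barrier: at a point where `‖σ(t)‖ = r`, the Rayleigh
bound and `‖f‖ ≤ d` give `⟨σ, σ'⟩ ≤ -(K_pd(r)·(1 + q₁) - d)·r`, and `s` is exactly the radius at
which `K_pd(r)·(1 + q₁) = d`, so `‖σ‖²` is strictly decreasing whenever it touches `r²`. Hence
`‖σ‖ ≤ r` for all such `r`, and letting `r ↓ s` gives the claim.
-/

open Set
open scoped RealInnerProductSpace

section Barrier

variable {E : Type*} [NormedAddCommGroup E] [InnerProductSpace ℝ E]

theorem norm_le_of_inner_deriv_neg_of_norm_eq {σ σ' : ℝ → E} {t₀ r : ℝ}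
    (hσ : ∀ t ≥ t₀, HasDerivWithinAt σ (σ' t) (Ici t₀) t) (h₀ : ‖σ t₀‖ ≤ r)
    (hbarrier : ∀ t ≥ t₀, ‖σ t‖ = r → ⟪σ t, σ' t⟫ < 0) :
    ∀ t ≥ t₀, ‖σ t‖ ≤ r := by
  intro t ht
  have hr : 0 ≤ r := (norm_nonneg _).trans h₀
  have hsq : ‖σ t‖ ^ 2 ≤ r ^ 2 := by
    refine image_le_of_deriv_right_lt_deriv_boundary' (f := (‖σ ·‖ ^ 2))
      (f' := fun x ↦ 2 * ⟪σ x, σ' x⟫) (b := t) (B' := fun _ ↦ 0)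
      (fun x hx ↦ (hσ x hx.1).norm_sq.continuousWithinAt.mono Icc_subset_Ici_self)
      (fun x hx ↦ ((hσ x hx.1).mono (Ici_subset_Ici.2 hx.1)).norm_sq)
      (by gcongr) continuousOn_const (fun x _ ↦ hasDerivWithinAt_const x _ _) ?_ ⟨ht, le_rfl⟩
    intro x hx hxr
    have hxr : ‖σ x‖ = r := (sq_eq_sq₀ (norm_nonneg _) hr).1 hxr
    linarith [hbarrier x hx.1 hxr]
  exact (sq_le_sq₀ (norm_nonneg _) hr).1 hsq

end Barrier

section Rayleigh

variable {m : ℕ} {Δ : EuclideanSpace ℝ (Fin m) →L[ℝ] EuclideanSpace ℝ (Fin m)} {q₁ : ℝ}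

theorem RayleighLB.id_add (hΔ : RayleighLB Δ q₁) :
    RayleighLB (ContinuousLinearMap.id ℝ _ + Δ) (1 + q₁) := by
  intro v
  have := hΔ v
  simp only [FunLike.coe_add, Pi.add_apply, ContinuousLinearMap.id_apply, inner_add_right,
    real_inner_self_eq_norm_sq]
  linarith

theorem RayleighLB.mul_norm_le_inner_apply_normalize (hΔ : RayleighLB Δ q₁)
    (v : EuclideanSpace ℝ (Fin m)) : q₁ * ‖v‖ ≤ ⟪v, Δ (‖v‖⁻¹ • v)⟫ := by
  rcases eq_or_ne v 0 with rfl | hv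
  · simp
  have hpos : 0 < ‖v‖ := norm_pos_iff.2 hv
  rw [map_smul, real_inner_smul_right]
  calc q₁ * ‖v‖ = ‖v‖⁻¹ * (q₁ * ‖v‖ ^ 2) := by field_simp
    _ ≤ ‖v‖⁻¹ * ⟪v, Δ v⟫ := by gcongr; exact hΔ v

theorem RayleighLB.inner_neg_smul_apply_normalize_add_neg (hΔ : RayleighLB Δ q₁)
    {v f : EuclideanSpace ℝ (Fin m)} (hv : v ≠ 0) {K d : ℝ} (hK : 0 ≤ K) (hf : ‖f‖ ≤ d)
    (hKd : d < K * q₁) : ⟪v, -K • Δ (‖v‖⁻¹ • v) + f⟫ < 0 := by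
  have hpos : 0 < ‖v‖ := norm_pos_iff.2 hv
  have hΔv := hΔ.mul_norm_le_inner_apply_normalize v
  have hfv : ⟪v, f⟫ ≤ ‖v‖ * d :=
    (real_inner_le_norm v f).trans (mul_le_mul_of_nonneg_left hf hpos.le)
  rw [inner_add_right, real_inner_smul_right]
  nlinarith [mul_le_mul_of_nonneg_left hΔv hK]

end Rayleigh

/-- The barrier gain `K_pd` of the paper. -/
noncomputable def pdBarrierGain (βbar ε r : ℝ) : ℝ := βbar * ε / (ε - r)

theorem lt_pdBarrierGain_mul {ε βbar d b r : ℝ} (hb : 0 < b) (hβbar : 0 < βbar)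
    (hβlt : βbar < d / b) (hsr : ε * (1 - βbar / (d / b)) < r) (hrε : r < ε) :
    d < pdBarrierGain βbar ε r * b := by
  have hd : 0 < d := by
    have := hβbar.trans hβlt
    rwa [div_pos_iff_of_pos_right hb] at this
  rw [pdBarrierGain, div_mul_eq_mul_div, lt_div_iff₀ (by linarith)]
  have : ε - r < ε * βbar * b / d := by
    rw [div_div_eq_mul_div, mul_sub, mul_one, ← mul_div_assoc, ← mul_assoc] at hsr
    linarith
  rw [lt_div_iff₀ hd] at this
  linarith

theorem statement17_general {m : ℕ} (ε βbar d q₁ t₀ : ℝ)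
    (hε : 0 < ε) (hβbar : 0 < βbar) (hq₁ : -1 < q₁)
    (hβlt : βbar < d / (1 + q₁))
    (σ : ℝ → EuclideanSpace ℝ (Fin m))
    (Δ : ℝ → EuclideanSpace ℝ (Fin m) →L[ℝ] EuclideanSpace ℝ (Fin m))
    (f : ℝ → EuclideanSpace ℝ (Fin m))
    (hσdiff : DifferentiableOn ℝ σ (Set.Ici t₀))
    (hσ0 : ‖σ t₀‖ ≤ ε * (1 - βbar / (d / (1 + q₁))))
    (hσ' : ∀ t ≥ t₀, σ t ≠ 0 → ‖σ t‖ < ε →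
      HasDerivWithinAt σ
        (-(βbar * ε / (ε - ‖σ t‖)) •
            ((ContinuousLinearMap.id ℝ (EuclideanSpace ℝ (Fin m)) + Δ t)
              (‖σ t‖⁻¹ • σ t)) + f t) (Set.Ici t₀) t)
    (hΔ : ∀ t ≥ t₀, RayleighLB (Δ t) q₁)
    (hf : ∀ t ≥ t₀, ‖f t‖ ≤ d) :
    ∀ t ≥ t₀, ‖σ t‖ ≤ ε * (1 - βbar / (d / (1 + q₁))) := by
  set s := ε * (1 - βbar / (d / (1 + q₁)))
  have hb : 0 < 1 + q₁ := by linarith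
  have hsε : s < ε := by
    have := mul_pos hε (div_pos hβbar (hβbar.trans hβlt))
    simp only [s, mul_sub, mul_one]
    linarith
  have hbarrier : ∀ r, s < r → r < ε → ∀ t ≥ t₀, ‖σ t‖ ≤ r := by
    intro r hsr hrε
    refine norm_le_of_inner_deriv_neg_of_norm_eq
      (fun t ht ↦ (hσdiff t ht).hasDerivWithinAt) (hσ0.trans hsr.le) ?_
    intro t ht hσr
    have hr : 0 < r := ((norm_nonneg _).trans hσ0).trans_lt hsr
    have hσt : σ t ≠ 0 := norm_pos_iff.1 (hσr ▸ hr)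
    rw [(hσ' t ht hσt (hσr ▸ hrε)).derivWithin (uniqueDiffOn_Ici t₀ t ht)]
    refine (hΔ t ht).id_add.inner_neg_smul_apply_normalize_add_neg hσt
      (by rw [hσr]; positivity) (hf t ht) ?_
    rw [hσr]
    exact lt_pdBarrierGain_mul hb hβbar hβlt hsr hrε
  intro t ht
  by_contra! hst
  obtain ⟨r, hsr, hr⟩ := exists_between (lt_min hst hsε)
  exact (hr.trans_le (min_le_left _ _)).not_ge
    (hbarrier r hsr (hr.trans_le (min_le_right _ _)) t ht)

theorem statement17 {m : ℕ} (hm : 1 ≤ m) (ε βbar d q₁ t₀ : ℝ)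
    (hε : 0 < ε) (hβbar : 0 < βbar) (hd : 0 ≤ d) (hq₁ : -1 < q₁)
    (hβlt : βbar < d / (1 + q₁))
    (σ : ℝ → EuclideanSpace ℝ (Fin m))
    (Δ : ℝ → EuclideanSpace ℝ (Fin m) →L[ℝ] EuclideanSpace ℝ (Fin m))
    (f : ℝ → EuclideanSpace ℝ (Fin m))
    (hσdiff : DifferentiableOn ℝ σ (Set.Ici t₀))
    (hσ0 : ‖σ t₀‖ ≤ ε * (1 - βbar / (d / (1 + q₁))))
    (hσ' : ∀ t ≥ t₀, σ t ≠ 0 → ‖σ t‖ < ε →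
      HasDerivWithinAt σ
        (-(βbar * ε / (ε - ‖σ t‖)) •
            ((ContinuousLinearMap.id ℝ (EuclideanSpace ℝ (Fin m)) + Δ t)
              (‖σ t‖⁻¹ • σ t)) + f t) (Set.Ici t₀) t)
    (hΔ : ∀ t ≥ t₀, RayleighLB (Δ t) q₁)
    (hf : ∀ t ≥ t₀, ‖f t‖ ≤ d) :
    ∀ t ≥ t₀, ‖σ t‖ ≤ ε * (1 - βbar / (d / (1 + q₁))) :=
  statement17_general ε βbar d q₁ t₀ hε hβbar hq₁ hβlt σ Δ f hσdiff hσ0 hσ' hΔ hf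
end

section
/- (Barrier containment under the positive semi-definite barrier gain.) Let m ≥ 1, ε > 0, d ≥ 0, q₁ > −1, b₀ = 1 + q₁, β* = d/b₀, and set s = ε·β*/(1 + β*). Let t₀ ∈ ℝ and let σ : [t₀, ∞) → ℝᵐ be differentiable with ‖σ(t₀)‖ < ε, such that at every t ≥ t₀ with σ(t) ≠ 0 and ‖σ(t)‖ < ε one has σ'(t) = −K_psd(‖σ(t)‖)·(I + Δ(t))(σ(t)/‖σ(t)‖) + f(t), where each Δ(t) satisfies the Rayleigh lower bound q₁ and ‖f(t)‖ ≤ d for all t. Then for every t ≥ t₀, ‖σ(t)‖ ≤ max(‖σ(t₀)‖, s); in particular ‖σ(t)‖ < ε for all t ≥ t₀. -/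
/-!
On the sphere `‖σ‖ = r` the radial component of the vector field satisfies
`⟨σ, σ'⟩ ≤ r (d - (1 + q₁) r / (ε - r))`, which is negative as soon as `r > s`,
since the barrier gain `r / (ε - r)` then beats the disturbance bound `d`.
So for every `R ∈ (max ‖σ(t₀)‖ s, ε)` the function `‖σ‖²` can never cross the level `R²`,
and letting `R` decrease to `max ‖σ(t₀)‖ s` gives the bound.
-/

open Set
open scoped RealInnerProductSpace

variable {E : Type*} [NormedAddCommGroup E] [InnerProductSpace ℝ E]

noncomputable def psdBarrierField (ε : ℝ) (T : E →L[ℝ] E) (w v : E) : E :=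
  -(‖v‖ / (ε - ‖v‖)) • ((ContinuousLinearMap.id ℝ E + T) (‖v‖⁻¹ • v)) + w

theorem inner_psdBarrierField_neg {ε d q₁ : ℝ} {T : E →L[ℝ] E} {v w : E}
    (hT : q₁ * ‖v‖ ^ 2 ≤ ⟪v, T v⟫) (hw : ‖w‖ ≤ d) (hv : 0 < ‖v‖) (hvε : ‖v‖ < ε)
    (hlevel : d * (ε - ‖v‖) < (1 + q₁) * ‖v‖) :
    ⟪v, psdBarrierField ε T w v⟫ < 0 := by
  have hεv : 0 < ε - ‖v‖ := sub_pos.2 hvε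
  have hexpand :
      ⟪v, psdBarrierField ε T w v⟫ = -((‖v‖ ^ 2 + ⟪v, T v⟫) / (ε - ‖v‖)) + ⟪v, w⟫ := by
    simp only [psdBarrierField, inner_add_right, real_inner_smul_right, map_smul,
      add_apply, ContinuousLinearMap.id_apply, real_inner_self_eq_norm_sq]
    field_simp
  have hvw : ⟪v, w⟫ ≤ ‖v‖ * d :=
    (real_inner_le_norm v w).trans (mul_le_mul_of_nonneg_left hw hv.le)
  have hgain : ‖v‖ * d < (1 + q₁) * ‖v‖ ^ 2 / (ε - ‖v‖) := by
    rw [lt_div_iff₀ hεv]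
    nlinarith
  calc ⟪v, psdBarrierField ε T w v⟫ = -((‖v‖ ^ 2 + ⟪v, T v⟫) / (ε - ‖v‖)) + ⟪v, w⟫ := hexpand
    _ ≤ -((1 + q₁) * ‖v‖ ^ 2 / (ε - ‖v‖)) + ‖v‖ * d := by
      gcongr
      linarith
    _ < 0 := by linarith

theorem norm_le_of_inner_deriv_neg_on_sphere {g g' : ℝ → E} {a b R : ℝ}
    (hg : ContinuousOn g (Icc a b)) (hg' : ∀ x ∈ Ico a b, HasDerivWithinAt g (g' x) (Ici x) x)
    (ha : ‖g a‖ ≤ R) (hsphere : ∀ x ∈ Ico a b, ‖g x‖ = R → ⟪g x, g' x⟫ < 0) :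
    ∀ x ∈ Icc a b, ‖g x‖ ≤ R := by
  have hR : 0 ≤ R := (norm_nonneg _).trans ha
  have hsq : ∀ x ∈ Icc a b, ‖g x‖ ^ 2 ≤ R ^ 2 :=
    image_le_of_deriv_right_lt_deriv_boundary (f := (‖g ·‖ ^ 2)) (B := fun _ => R ^ 2)
      (B' := fun _ => 0) (hg.norm.pow 2) (fun x hx => (hg' x hx).norm_sq) (by gcongr)
      (fun _ => hasDerivAt_const _ _) fun x hx hxR => by
        have := hsphere x hx ((sq_eq_sq₀ (norm_nonneg _) hR).1 hxR)
        linarith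
  exact fun x hx => (sq_le_sq₀ (norm_nonneg _) hR).1 (hsq x hx)

theorem barrier_gain_dominates {ε d q₁ r : ℝ} (hd : 0 ≤ d) (hq₁ : -1 < q₁)
    (hr : ε * (d / (1 + q₁)) / (1 + d / (1 + q₁)) < r) : d * (ε - r) < (1 + q₁) * r := by
  have hb : 0 < 1 + q₁ := by linarith
  rw [div_lt_iff₀ (by positivity)] at hr
  field_simp at hr
  linarith

theorem barrier_level_lt {ε d q₁ : ℝ} (hε : 0 < ε) (hd : 0 ≤ d) (hq₁ : -1 < q₁) :
    ε * (d / (1 + q₁)) / (1 + d / (1 + q₁)) < ε := by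
  have hβ : 0 ≤ d / (1 + q₁) := div_nonneg hd (by linarith)
  rw [div_lt_iff₀ (by positivity)]
  nlinarith

theorem statement18_general {m : ℕ} (ε d q₁ t₀ : ℝ)
    (hε : 0 < ε) (hd : 0 ≤ d) (hq₁ : -1 < q₁)
    (σ : ℝ → EuclideanSpace ℝ (Fin m))
    (Δ : ℝ → EuclideanSpace ℝ (Fin m) →L[ℝ] EuclideanSpace ℝ (Fin m))
    (f : ℝ → EuclideanSpace ℝ (Fin m))
    (hσdiff : DifferentiableOn ℝ σ (Set.Ici t₀))
    (hσ0 : ‖σ t₀‖ < ε)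
    (hσ' : ∀ t ≥ t₀, σ t ≠ 0 → ‖σ t‖ < ε →
      HasDerivWithinAt σ
        (-(‖σ t‖ / (ε - ‖σ t‖)) •
            ((ContinuousLinearMap.id ℝ (EuclideanSpace ℝ (Fin m)) + Δ t)
              (‖σ t‖⁻¹ • σ t)) + f t) (Set.Ici t₀) t)
    (hΔ : ∀ t ≥ t₀, RayleighLB (Δ t) q₁)
    (hf : ∀ t ≥ t₀, ‖f t‖ ≤ d) :
    (∀ t ≥ t₀, ‖σ t‖ ≤
      max ‖σ t₀‖ (ε * (d / (1 + q₁)) / (1 + d / (1 + q₁)))) ∧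
    (∀ t ≥ t₀, ‖σ t‖ < ε) := by
  set s := ε * (d / (1 + q₁)) / (1 + d / (1 + q₁))
  have hMε : max ‖σ t₀‖ s < ε := max_lt hσ0 (barrier_level_lt hε hd hq₁)
  have hball : ∀ R, max ‖σ t₀‖ s < R → R < ε → ∀ t ≥ t₀, ‖σ t‖ ≤ R := by
    intro R hMR hRε t ht
    refine norm_le_of_inner_deriv_neg_on_sphere (g' := derivWithin σ (Ici t₀))
      (hσdiff.continuousOn.mono Icc_subset_Ici_self)
      (fun x hx => ((hσdiff x hx.1).hasDerivWithinAt).mono (Ici_subset_Ici.2 hx.1))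
      ((le_max_left _ _).trans hMR.le) (fun x hx hxR => ?_) t ⟨ht, le_rfl⟩
    have hxpos : 0 < ‖σ x‖ := hxR ▸ (norm_nonneg _).trans_lt ((le_max_left _ _).trans_lt hMR)
    have hxε : ‖σ x‖ < ε := hxR ▸ hRε
    rw [(hσ' x hx.1 (norm_pos_iff.1 hxpos) hxε).derivWithin (uniqueDiffOn_Ici t₀ x hx.1)]
    exact inner_psdBarrierField_neg (hΔ x hx.1 _) (hf x hx.1) hxpos hxε
      (hxR ▸ barrier_gain_dominates hd hq₁ ((le_max_right _ _).trans_lt hMR))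
  have hbound : ∀ t ≥ t₀, ‖σ t‖ ≤ max ‖σ t₀‖ s := fun t ht => by
    by_contra! h
    obtain ⟨R, hMR, hR⟩ := exists_between (lt_min h hMε)
    exact (hball R hMR (hR.trans_le (min_le_right _ _)) t ht).not_gt (hR.trans_le (min_le_left _ _))
  exact ⟨hbound, fun t ht => (hbound t ht).trans_lt hMε⟩

theorem statement18 {m : ℕ} (hm : 1 ≤ m) (ε d q₁ t₀ : ℝ)
    (hε : 0 < ε) (hd : 0 ≤ d) (hq₁ : -1 < q₁)
    (σ : ℝ → EuclideanSpace ℝ (Fin m))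
    (Δ : ℝ → EuclideanSpace ℝ (Fin m) →L[ℝ] EuclideanSpace ℝ (Fin m))
    (f : ℝ → EuclideanSpace ℝ (Fin m))
    (hσdiff : DifferentiableOn ℝ σ (Set.Ici t₀))
    (hσ0 : ‖σ t₀‖ < ε)
    (hσ' : ∀ t ≥ t₀, σ t ≠ 0 → ‖σ t‖ < ε →
      HasDerivWithinAt σ
        (-(‖σ t‖ / (ε - ‖σ t‖)) •
            ((ContinuousLinearMap.id ℝ (EuclideanSpace ℝ (Fin m)) + Δ t)
              (‖σ t‖⁻¹ • σ t)) + f t) (Set.Ici t₀) t)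
    (hΔ : ∀ t ≥ t₀, RayleighLB (Δ t) q₁)
    (hf : ∀ t ≥ t₀, ‖f t‖ ≤ d) :
    (∀ t ≥ t₀, ‖σ t‖ ≤
      max ‖σ t₀‖ (ε * (d / (1 + q₁)) / (1 + d / (1 + q₁)))) ∧
    (∀ t ≥ t₀, ‖σ t‖ < ε) :=
  statement18_general ε d q₁ t₀ hε hd hq₁ σ Δ f hσdiff hσ0 hσ' hΔ hf
end
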